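/- arXiv:1303.4615 — 5 statements merged into one kernel-verified Lean document; each statement's English description precedes it below -/
import Mathlib

section
/- The occupation measure μ associated with an initial distribution μ₀ satisfies Liouville's equation in weak form: for every v ∈ C¹([0,1] × ℝⁿ), ∫ L v dμ = ∫ v(1,·) dμ₁ − ∫ v(0,·) dμ₀, where μ₁ is the pushforward of μ₀ under the time-1 flow and L v = ∂v/∂t + ∇ₓv · f. -/
/-!
Along each trajectory `t ↦ (t, x(t|x₀))` the chain rule gives `d/dt v(t, x(t|x₀)) = L v (t, x(t|x₀))`,
so by the fundamental theorem of calculus `∫₀¹ L v (t, x(t|x₀)) dt = v(1, x(1|x₀)) - v(0, x₀)`.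
Integrating over `x₀` against `μ₀` and exchanging the order of integration (Fubini; all integrands
are continuous on the compact set `[0,1] × X`, which carries the occupation measure) gives the
weak Liouville equation.
-/

open MeasureTheory Set

theorem ContinuousOn.integrable_of_measure_compl_eq_zero {α E : Type*} [TopologicalSpace α]
    [T2Space α] [MeasurableSpace α] [OpensMeasurableSpace α] [NormedAddCommGroup E]
    {μ : Measure α} [IsFiniteMeasureOnCompacts μ] {K : Set α} {g : α → E}
    (hK : IsCompact K) (hg : ContinuousOn g K) (hμK : μ Kᶜ = 0) : Integrable g μ := by
  rw [← Measure.restrict_eq_self_of_ae_mem (mem_ae_iff.2 hμK)]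
  exact hg.integrableOn_compact hK

theorem integral_fderiv_apply_hasDerivAt_eq_sub {F : Type*} [NormedAddCommGroup F]
    [NormedSpace ℝ F] {v : F → ℝ} (hv : Differentiable ℝ v) {γ γ' : ℝ → F} {a b : ℝ}
    (hγ : ∀ t ∈ uIcc a b, HasDerivAt γ (γ' t) t)
    (hint : IntervalIntegrable (fun t => fderiv ℝ v (γ t) (γ' t)) volume a b) :
    ∫ t in a..b, fderiv ℝ v (γ t) (γ' t) = v (γ b) - v (γ a) :=
  intervalIntegral.integral_eq_sub_of_hasDerivAt
    (fun t ht => (hv (γ t)).hasFDerivAt.comp_hasDerivAt t (hγ t ht)) hint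

theorem integral_Icc_fderiv_apply_one_prod_eq_sub {E : Type*} [NormedAddCommGroup E]
    [NormedSpace ℝ E] {v : ℝ × E → ℝ} (hv : Differentiable ℝ v) {x x' : ℝ → E} {a b : ℝ}
    (hab : a ≤ b) (hx : ∀ t ∈ Icc a b, HasDerivAt x (x' t) t)
    (hcont : ContinuousOn (fun t => fderiv ℝ v (t, x t) (1, x' t)) (Icc a b)) :
    ∫ t in Icc a b, fderiv ℝ v (t, x t) (1, x' t) = v (b, x b) - v (a, x a) := by
  rw [integral_Icc_eq_integral_Ioc, ← intervalIntegral.integral_of_le hab]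
  rw [← uIcc_of_le hab] at hx hcont
  exact integral_fderiv_apply_hasDerivAt_eq_sub hv
    (fun t ht => (hasDerivAt_id t).prodMk (hx t ht)) hcont.intervalIntegrable

theorem stmt_4_general {n : ℕ} (X : Set (Fin n → ℝ)) (hX : IsCompact X)
    (f : ℝ → (Fin n → ℝ) → (Fin n → ℝ))
    (hf : Continuous fun p : ℝ × (Fin n → ℝ) => f p.1 p.2)
    (flow : ℝ → (Fin n → ℝ) → (Fin n → ℝ))
    (hflowc : Continuous fun p : ℝ × (Fin n → ℝ) => flow p.1 p.2)
    (h0 : ∀ x₀ ∈ X, flow 0 x₀ = x₀)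
    (hode : ∀ x₀ ∈ X, ∀ t ∈ Icc (0:ℝ) 1,
      HasDerivAt (fun s => flow s x₀) (f t (flow t x₀)) t)
    (μ₀ : Measure (Fin n → ℝ)) [IsProbabilityMeasure μ₀] (hμ₀X : μ₀ Xᶜ = 0)
    (v : ℝ × (Fin n → ℝ) → ℝ) (hv : ContDiff ℝ 1 v) :
    ∫ p, fderiv ℝ v p (1, f p.1 p.2)
        ∂(Measure.map (fun q : ℝ × (Fin n → ℝ) => (q.1, flow q.1 q.2))
            ((volume.restrict (Icc (0:ℝ) 1)).prod μ₀))
      = ∫ x, v (1, x) ∂(Measure.map (flow 1) μ₀) - ∫ x, v (0, x) ∂μ₀ := by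
  have hΦ : Continuous fun q : ℝ × (Fin n → ℝ) => (q.1, flow q.1 q.2) :=
    continuous_fst.prodMk hflowc
  have hLv : Continuous fun p : ℝ × (Fin n → ℝ) => fderiv ℝ v p (1, f p.1 p.2) :=
    (hv.continuous_fderiv one_ne_zero).clm_apply (continuous_const.prodMk hf)
  have hv_at (t : ℝ) : Continuous fun x => v (t, x) := hv.continuous.comp (.prodMk_right t)
  have hflow1 : Continuous (flow 1) := hflowc.comp (.prodMk_right 1)
  have hνK : (volume.restrict (Icc (0:ℝ) 1)).prod μ₀ (Icc 0 1 ×ˢ X)ᶜ = 0 :=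
    Measure.measure_prod_compl_eq_zero (by simp) hμ₀X
  have hLv_occ : Integrable (fun q : ℝ × (Fin n → ℝ) =>
      fderiv ℝ v (q.1, flow q.1 q.2) (1, f q.1 (flow q.1 q.2)))
      ((volume.restrict (Icc (0:ℝ) 1)).prod μ₀) :=
    (hLv.comp hΦ).continuousOn.integrable_of_measure_compl_eq_zero (isCompact_Icc.prod hX) hνK
  rw [integral_map hΦ.aemeasurable hLv.aestronglyMeasurable,
    integral_map hflow1.aemeasurable (hv_at 1).aestronglyMeasurable]
  dsimp only
  rw [integral_prod_symm _ hLv_occ, ← integral_sub (f := fun x => v (1, flow 1 x))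
    (((hv_at 1).comp hflow1).continuousOn.integrable_of_measure_compl_eq_zero hX hμ₀X)
    ((hv_at 0).continuousOn.integrable_of_measure_compl_eq_zero hX hμ₀X)]
  have hX_ae : ∀ᵐ x ∂μ₀, x ∈ X := mem_ae_iff.2 hμ₀X
  refine integral_congr_ae (hX_ae.mono fun x₀ hx₀ => ?_)
  dsimp only
  rw [integral_Icc_fderiv_apply_one_prod_eq_sub (hv.differentiable one_ne_zero) zero_le_one
    (hode x₀ hx₀) ((hLv.comp hΦ).comp (.prodMk_left x₀)).continuousOn, h0 x₀ hx₀]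

/-- Liouville's equation in weak form: the occupation measure `μ` associated with an initial
distribution `μ₀` satisfies `∫ L v dμ = ∫ v(1,·) dμ₁ − ∫ v(0,·) dμ₀` for every `C¹` test
function `v`, where `μ₁` is the pushforward of `μ₀` under the time-1 flow and
`L v = ∂v/∂t + ∇ₓv · f`. -/
theorem stmt_4 {n : ℕ} (X : Set (Fin n → ℝ)) (hX : IsCompact X)
    (f : ℝ → (Fin n → ℝ) → (Fin n → ℝ))
    (hf : Continuous fun p : ℝ × (Fin n → ℝ) => f p.1 p.2)
    (flow : ℝ → (Fin n → ℝ) → (Fin n → ℝ))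
    (hflowc : Continuous fun p : ℝ × (Fin n → ℝ) => flow p.1 p.2)
    (h0 : ∀ x₀ ∈ X, flow 0 x₀ = x₀)
    (hstay : ∀ x₀ ∈ X, ∀ t ∈ Icc (0:ℝ) 1, flow t x₀ ∈ X)
    (hode : ∀ x₀ ∈ X, ∀ t ∈ Icc (0:ℝ) 1,
      HasDerivAt (fun s => flow s x₀) (f t (flow t x₀)) t)
    (μ₀ : Measure (Fin n → ℝ)) [IsProbabilityMeasure μ₀] (hμ₀X : μ₀ Xᶜ = 0)
    (v : ℝ × (Fin n → ℝ) → ℝ) (hv : ContDiff ℝ 1 v) :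
    ∫ p, fderiv ℝ v p (1, f p.1 p.2)
        ∂(Measure.map (fun q : ℝ × (Fin n → ℝ) => (q.1, flow q.1 q.2))
            ((volume.restrict (Icc (0:ℝ) 1)).prod μ₀))
      = ∫ x, v (1, x) ∂(Measure.map (flow 1) μ₀) - ∫ x, v (0, x) ∂μ₀ :=
  stmt_4_general X hX f hf flow hflowc h0 hode μ₀ hμ₀X v hv
end

section
/- Any dual-feasible pair (v₀, v) yields an outer approximation of the region of attraction: if v₀ ≥ 0 on X, v₀ ≥ 1 + v(0,·) on X, v(1,·) ≥ 0 on X₁, and ∂v/∂t + ∇ₓv·f ≤ 0 on [0,1]×X, then every x₀ ∈ X whose trajectory x(t|x₀) stays in X for all t ∈ [0,1] and satisfies x(1|x₀) ∈ X₁ must satisfy v₀(x₀) ≥ 1. Hence X₀* ⊆ {x : v₀(x) ≥ 1}. -/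
open Set

/-! The dual constraint `∂v/∂t + ∇ₓv · f ≤ 0` on `[0,1] × X` says that `v` does not increase along
any trajectory that stays in `X`. For such a trajectory ending in `X₁` this gives
`0 ≤ v(1, x(1)) ≤ v(0, x₀) ≤ v₀(x₀) - 1`. -/

section AlongCurve

variable {E : Type*} [NormedAddCommGroup E] [NormedSpace ℝ E] {v : ℝ × E → ℝ} {x : ℝ → E}

theorem hasDerivAt_comp_prodMk_self {x' : E} {t : ℝ} (hv : DifferentiableAt ℝ v (t, x t))
    (hx : HasDerivAt x x' t) :
    HasDerivAt (fun s => v (s, x s)) (fderiv ℝ v (t, x t) (1, x')) t :=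
  hv.hasFDerivAt.comp_hasDerivAt t ((hasDerivAt_id t).prodMk hx)

theorem antitoneOn_comp_prodMk_self_of_fderiv_nonpos {x' : ℝ → E} {a b : ℝ}
    (hv : ∀ t ∈ Icc a b, DifferentiableAt ℝ v (t, x t))
    (hx : ∀ t ∈ Icc a b, HasDerivAt x (x' t) t)
    (hdecr : ∀ t ∈ Icc a b, fderiv ℝ v (t, x t) (1, x' t) ≤ 0) :
    AntitoneOn (fun t => v (t, x t)) (Icc a b) := by
  have hderiv : ∀ t ∈ Icc a b, HasDerivAt (fun s => v (s, x s)) (fderiv ℝ v (t, x t) (1, x' t)) t :=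
    fun t ht => hasDerivAt_comp_prodMk_self (hv t ht) (hx t ht)
  refine antitoneOn_of_hasDerivWithinAt_nonpos (convex_Icc a b)
    (fun t ht => (hderiv t ht).continuousAt.continuousWithinAt) (fun t ht => ?_)
    (fun t ht => hdecr t (interior_subset ht))
  exact (hderiv t (interior_subset ht)).hasDerivWithinAt

end AlongCurve

theorem stmt_8_general {n : ℕ} (X X₁ : Set (Fin n → ℝ))
    (f : ℝ → (Fin n → ℝ) → (Fin n → ℝ))
    (v₀ : (Fin n → ℝ) → ℝ)
    (v : ℝ × (Fin n → ℝ) → ℝ) (hvc : ContDiff ℝ 1 v)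
    (h2 : ∀ x ∈ X, 1 + v (0, x) ≤ v₀ x)
    (h3 : ∀ x ∈ X₁, 0 ≤ v (1, x))
    (h4 : ∀ t ∈ Icc (0:ℝ) 1, ∀ x ∈ X, fderiv ℝ v (t, x) (1, f t x) ≤ 0)
    (x₀ : Fin n → ℝ) (hx₀ : x₀ ∈ X)
    (x : ℝ → (Fin n → ℝ)) (hx0 : x 0 = x₀)
    (hode : ∀ t ∈ Icc (0:ℝ) 1, HasDerivAt x (f t (x t)) t)
    (hstay : ∀ t ∈ Icc (0:ℝ) 1, x t ∈ X)
    (hend : x 1 ∈ X₁) :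
    1 ≤ v₀ x₀ := by
  have hanti : AntitoneOn (fun t => v (t, x t)) (Icc 0 1) :=
    antitoneOn_comp_prodMk_self_of_fderiv_nonpos
      (fun t _ => hvc.differentiable one_ne_zero _) hode (fun t ht => h4 t ht _ (hstay t ht))
  have hv10 : v (1, x 1) ≤ v (0, x 0) :=
    hanti (left_mem_Icc.2 zero_le_one) (right_mem_Icc.2 zero_le_one) zero_le_one
  subst hx0
  linarith [h2 (x 0) hx₀, h3 (x 1) hend]

/-- Any dual-feasible pair `(v₀, v)` yields an outer approximation of the region of
attraction: every consistent initial condition `x₀` satisfies `v₀(x₀) ≥ 1`. -/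
theorem stmt_8 {n : ℕ} (X X₁ : Set (Fin n → ℝ)) (hX : IsCompact X)
    (hX₁ : IsClosed X₁) (hX₁X : X₁ ⊆ X)
    (f : ℝ → (Fin n → ℝ) → (Fin n → ℝ))
    (hf : Continuous fun p : ℝ × (Fin n → ℝ) => f p.1 p.2)
    (v₀ : (Fin n → ℝ) → ℝ) (hv₀c : Continuous v₀)
    (v : ℝ × (Fin n → ℝ) → ℝ) (hvc : ContDiff ℝ 1 v)
    (h1 : ∀ x ∈ X, 0 ≤ v₀ x)
    (h2 : ∀ x ∈ X, 1 + v (0, x) ≤ v₀ x)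
    (h3 : ∀ x ∈ X₁, 0 ≤ v (1, x))
    (h4 : ∀ t ∈ Icc (0:ℝ) 1, ∀ x ∈ X, fderiv ℝ v (t, x) (1, f t x) ≤ 0)
    (x₀ : Fin n → ℝ) (hx₀ : x₀ ∈ X)
    (x : ℝ → (Fin n → ℝ)) (hx0 : x 0 = x₀)
    (hode : ∀ t ∈ Icc (0:ℝ) 1, HasDerivAt x (f t (x t)) t)
    (hstay : ∀ t ∈ Icc (0:ℝ) 1, x t ∈ X)
    (hend : x 1 ∈ X₁) :
    1 ≤ v₀ x₀ :=
  stmt_8_general X X₁ f v₀ v hvc h2 h3 h4 x₀ hx₀ x hx0 hode hstay hend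
end

section
/- Multi-time-point outer approximation: suppose continuous functions v₀ on X and v_{k,k+1} ∈ C¹ (k = 0,…,m−2) satisfy v₀ ≥ 0 on X, v₀(x) ≥ 1 + v_{0,1}(0,x) for x ∈ X, v_{k−1,k}(t_k,x) ≥ v_{k,k+1}(t_k,x) for x ∈ X_k (k = 1,…,m−2), v_{m−2,m−1}(t_{m−1},x) ≥ 0 for x ∈ X_{m−1}, and −L v_{k,k+1} ≥ 0 on [0,1]×X for every k. Then every initial condition x₀ ∈ X admitting a trajectory with x(t|x₀) ∈ X for all t ∈ [0,1] and x(t_k|x₀) ∈ X_k for all k = 1,…,m−1 satisfies v₀(x₀) ≥ 1. -/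
/-!
Along a trajectory, `s ↦ v_{k,k+1}(s, x(s))` has derivative `L v_{k,k+1} ≤ 0`, so it decreases
on `[t_k, t_{k+1}]`. At each measurement time the constraint on `X_k` lets the value pass from
`v_{k-1,k}` down to `v_{k,k+1}`, so the values at the times `t_k` form a decreasing chain from
`v_{0,1}(0, x₀)` to `v_{m-2,m-1}(1, x(1)) ≥ 0`. Hence `v₀(x₀) ≥ 1 + v_{0,1}(0, x₀) ≥ 1`.
-/

open Set

section Lyapunov

variable {E : Type*} [NormedAddCommGroup E] [NormedSpace ℝ E]

theorem antitoneOn_along_of_fderiv_nonpos {V : ℝ × E → ℝ} (hV : Differentiable ℝ V)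
    {x x' : ℝ → E} {a b : ℝ} (hx : ∀ s ∈ Icc a b, HasDerivAt x (x' s) s)
    (hVx : ∀ s ∈ Icc a b, fderiv ℝ V (s, x s) (1, x' s) ≤ 0) :
    AntitoneOn (fun s => V (s, x s)) (Icc a b) := by
  have hderiv : ∀ s ∈ Icc a b,
      HasDerivAt (fun s => V (s, x s)) (fderiv ℝ V (s, x s) (1, x' s)) s := fun s hs =>
    (hV _).hasFDerivAt.comp_hasDerivAt s ((hasDerivAt_id s).prodMk (hx s hs))
  refine antitoneOn_of_deriv_nonpos (convex_Icc a b)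
    (fun s hs => (hderiv s hs).continuousAt.continuousWithinAt) ?_ ?_
  · rw [interior_Icc]
    exact fun s hs => (hderiv s (Ioo_subset_Icc_self hs)).differentiableAt.differentiableWithinAt
  · rw [interior_Icc]
    intro s hs
    rw [(hderiv s (Ioo_subset_Icc_self hs)).deriv]
    exact hVx s (Ioo_subset_Icc_self hs)

end Lyapunov

theorem chain_end_le_start {α β : Type*} [Preorder β] {g : ℕ → α → β} {t : ℕ → α} {N : ℕ}
    (hflow : ∀ k ≤ N, g k (t (k + 1)) ≤ g k (t k))
    (hjump : ∀ k < N, g (k + 1) (t (k + 1)) ≤ g k (t (k + 1))) :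
    g N (t (N + 1)) ≤ g 0 (t 0) := by
  have hanti : AntitoneOn (fun k => g k (t k)) (Iic N) :=
    antitoneOn_of_succ_le ordConnected_Iic fun k _ hk hsucc => by
      rw [Order.succ_eq_add_one] at hsucc ⊢
      exact (hjump k (Nat.lt_of_succ_le hsucc)).trans (hflow k hk)
  exact (hflow N le_rfl).trans (hanti (Nat.zero_le N) self_mem_Iic (Nat.zero_le N))

theorem stmt_9_general {n m : ℕ} (hm : 2 ≤ m)
    (X : Set (Fin n → ℝ))
    (Xk : ℕ → Set (Fin n → ℝ))
    (t : ℕ → ℝ) (ht0 : t 0 = 0) (ht1 : t (m - 1) = 1)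
    (htmono : ∀ k < m - 1, t k < t (k + 1))
    (f : ℝ → (Fin n → ℝ) → (Fin n → ℝ))
    (v₀ : (Fin n → ℝ) → ℝ)
    (v : ℕ → ℝ × (Fin n → ℝ) → ℝ) (hvc : ∀ k < m - 1, ContDiff ℝ 1 (v k))
    (h2 : ∀ x ∈ X, 1 + v 0 (0, x) ≤ v₀ x)
    (h3 : ∀ k, 1 ≤ k → k ≤ m - 2 → ∀ x ∈ Xk k, v k (t k, x) ≤ v (k - 1) (t k, x))
    (h4 : ∀ x ∈ Xk (m - 1), 0 ≤ v (m - 2) (t (m - 1), x))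
    (h5 : ∀ k < m - 1, ∀ s ∈ Icc (0:ℝ) 1, ∀ x ∈ X,
      fderiv ℝ (v k) (s, x) (1, f s x) ≤ 0)
    (x₀ : Fin n → ℝ) (hx₀ : x₀ ∈ X)
    (x : ℝ → (Fin n → ℝ)) (hx0 : x 0 = x₀)
    (hode : ∀ s ∈ Icc (0:ℝ) 1, HasDerivAt x (f s (x s)) s)
    (hstay : ∀ s ∈ Icc (0:ℝ) 1, x s ∈ X)
    (hmeas : ∀ k, 1 ≤ k → k ≤ m - 1 → x (t k) ∈ Xk k) :
    1 ≤ v₀ x₀ := by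
  obtain ⟨N, rfl⟩ : ∃ N, m = N + 2 := ⟨m - 2, by omega⟩
  have hN1 : N + 2 - 1 = N + 1 := rfl
  rw [hN1] at ht1 htmono hvc h4 h5 hmeas
  rw [Nat.add_sub_cancel] at h3 h4
  have ht : MonotoneOn t (Iic (N + 1)) :=
    (strictMonoOn_Iic_of_lt_succ fun k hk => by simpa using htmono k hk).monotoneOn
  have htI : ∀ k ≤ N + 1, t k ∈ Icc (0:ℝ) 1 := fun k hk =>
    ⟨ht0 ▸ ht (Nat.zero_le _) hk (Nat.zero_le k), ht1 ▸ ht hk self_mem_Iic hk⟩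
  have hflow : ∀ k ≤ N, v k (t (k + 1), x (t (k + 1))) ≤ v k (t k, x (t k)) := fun k hk =>
    antitoneOn_along_of_fderiv_nonpos ((hvc k (by omega)).differentiable one_ne_zero) hode
      (fun s hs => h5 k (by omega) s hs _ (hstay s hs))
      (htI k (by omega)) (htI (k + 1) (by omega))
      (ht (mem_Iic.2 (by omega)) (mem_Iic.2 (by omega)) k.le_succ)
  have hjump : ∀ k < N, v (k + 1) (t (k + 1), x (t (k + 1))) ≤ v k (t (k + 1), x (t (k + 1))) :=
    fun k hk => h3 (k + 1) (by omega) hk _ (hmeas (k + 1) (by omega) (by omega))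
  have hchain := chain_end_le_start (g := fun k s => v k (s, x s)) hflow hjump
  have hend := h4 _ (hmeas (N + 1) (by omega) le_rfl)
  simp only [ht0, hx0] at hchain
  linarith [h2 x₀ hx₀]

/-- Multi-time-point outer approximation: if `v₀` and the `C¹` functions `v k = v_{k,k+1}`
satisfy the dual feasibility conditions, then every initial condition admitting a trajectory
staying in `X` and satisfying the measurement constraints `X_k` at the times `t_k`
satisfies `v₀(x₀) ≥ 1`. -/
theorem stmt_9 {n m : ℕ} (hm : 2 ≤ m)
    (X : Set (Fin n → ℝ)) (hX : IsCompact X)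
    (Xk : ℕ → Set (Fin n → ℝ)) (hXk : ∀ k, IsClosed (Xk k) ∧ Xk k ⊆ X)
    (t : ℕ → ℝ) (ht0 : t 0 = 0) (ht1 : t (m - 1) = 1)
    (htmono : ∀ k < m - 1, t k < t (k + 1))
    (f : ℝ → (Fin n → ℝ) → (Fin n → ℝ))
    (hf : Continuous fun p : ℝ × (Fin n → ℝ) => f p.1 p.2)
    (v₀ : (Fin n → ℝ) → ℝ) (hv₀c : Continuous v₀)
    (v : ℕ → ℝ × (Fin n → ℝ) → ℝ) (hvc : ∀ k < m - 1, ContDiff ℝ 1 (v k))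
    (h1 : ∀ x ∈ X, 0 ≤ v₀ x)
    (h2 : ∀ x ∈ X, 1 + v 0 (0, x) ≤ v₀ x)
    (h3 : ∀ k, 1 ≤ k → k ≤ m - 2 → ∀ x ∈ Xk k, v k (t k, x) ≤ v (k - 1) (t k, x))
    (h4 : ∀ x ∈ Xk (m - 1), 0 ≤ v (m - 2) (t (m - 1), x))
    (h5 : ∀ k < m - 1, ∀ s ∈ Icc (0:ℝ) 1, ∀ x ∈ X,
      fderiv ℝ (v k) (s, x) (1, f s x) ≤ 0)
    (x₀ : Fin n → ℝ) (hx₀ : x₀ ∈ X)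
    (x : ℝ → (Fin n → ℝ)) (hx0 : x 0 = x₀)
    (hode : ∀ s ∈ Icc (0:ℝ) 1, HasDerivAt x (f s (x s)) s)
    (hstay : ∀ s ∈ Icc (0:ℝ) 1, x s ∈ X)
    (hmeas : ∀ k, 1 ≤ k → k ≤ m - 1 → x (t k) ∈ Xk k) :
    1 ≤ v₀ x₀ :=
  stmt_9_general hm X Xk t ht0 ht1 htmono f v₀ v hvc h2 h3 h4 h5 x₀ hx₀ x hx0 hode hstay hmeas
end

section
/- If the dual-feasible function v₀ additionally satisfies ∫_X v₀ dλ < λ(X₀*) for Lebesgue measure λ, a contradiction follows; equivalently, for any dual-feasible (v₀, v), λ(X₀*) ≤ ∫_X v₀ dλ. -/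
/-!
Along a trajectory `x` that starts at `x₀`, stays in `X` on `[0, 1]` and ends in `X₁`, the
function `t ↦ v (t, x t)` has derivative `Lv ≤ 0`, so `0 ≤ v (1, x 1) ≤ v (0, x₀) ≤ v₀ x₀ - 1`.
Hence `X₀*` lies in the superlevel set `{x ∈ X | 1 ≤ v₀ x}`, whose volume is at most
`∫_X v₀ dλ` by Markov's inequality, as `v₀ ≥ 0` on `X`.
-/

open MeasureTheory Set

section Trajectory

variable {E : Type*} [NormedAddCommGroup E] [NormedSpace ℝ E]
  {v : ℝ × E → ℝ} {F : ℝ → E → E} {x : ℝ → E} {a b : ℝ}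

theorem antitoneOn_comp_trajectory (hv : Differentiable ℝ v)
    (hx : ∀ t ∈ Icc a b, HasDerivAt x (F t (x t)) t)
    (hLv : ∀ t ∈ Icc a b, fderiv ℝ v (t, x t) (1, F t (x t)) ≤ 0) :
    AntitoneOn (fun t => v (t, x t)) (Icc a b) := by
  have hderiv : ∀ t ∈ Icc a b,
      HasDerivAt (fun s => v (s, x s)) (fderiv ℝ v (t, x t) (1, F t (x t))) t := fun t ht =>
    (hv (t, x t)).hasFDerivAt.comp_hasDerivAt t ((hasDerivAt_id t).prodMk (hx t ht))
  exact antitoneOn_of_hasDerivWithinAt_nonpos (convex_Icc a b)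
    (fun t ht => (hderiv t ht).continuousAt.continuousWithinAt)
    (fun t ht => (hderiv t (interior_subset ht)).hasDerivWithinAt)
    (fun t ht => hLv t (interior_subset ht))

theorem one_le_of_trajectory {X X₁ : Set E} {v₀ : E → ℝ} (hv : Differentiable ℝ v)
    (hv₀ : ∀ y ∈ X, 1 + v (0, y) ≤ v₀ y) (hv₁ : ∀ y ∈ X₁, 0 ≤ v (1, y))
    (hLv : ∀ t ∈ Icc (0 : ℝ) 1, ∀ y ∈ X, fderiv ℝ v (t, y) (1, F t y) ≤ 0)
    (hx : ∀ t ∈ Icc (0 : ℝ) 1, HasDerivAt x (F t (x t)) t)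
    (hxX : ∀ t ∈ Icc (0 : ℝ) 1, x t ∈ X) (hx₁ : x 1 ∈ X₁) :
    1 ≤ v₀ (x 0) := by
  have hdecr : v (1, x 1) ≤ v (0, x 0) :=
    antitoneOn_comp_trajectory hv hx (fun t ht => hLv t ht (x t) (hxX t ht))
      (left_mem_Icc.2 zero_le_one) (right_mem_Icc.2 zero_le_one) zero_le_one
  linarith [hv₀ (x 0) (hxX 0 (left_mem_Icc.2 zero_le_one)), hv₁ (x 1) hx₁]

end Trajectory

theorem measure_one_le_le_ofReal_setIntegral {α : Type*} [MeasurableSpace α] {μ : Measure α}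
    {s : Set α} (hs : MeasurableSet s) {g : α → ℝ} (hg : IntegrableOn g s μ)
    (hg₀ : ∀ y ∈ s, 0 ≤ g y) :
    μ {y | y ∈ s ∧ 1 ≤ g y} ≤ ENNReal.ofReal (∫ y in s, g y ∂μ) := by
  rw [ofReal_integral_eq_lintegral_ofReal hg ((ae_restrict_iff' hs).2 (ae_of_all _ hg₀))]
  calc μ {y | y ∈ s ∧ 1 ≤ g y} = μ.restrict s {y | 1 ≤ ENNReal.ofReal (g y)} := by
        rw [Measure.restrict_apply' hs]
        congr 1
        ext y
        simp [ENNReal.one_le_ofReal, and_comm]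
    _ ≤ ∫⁻ y in s, ENNReal.ofReal (g y) ∂μ := by
        simpa using mul_meas_ge_le_lintegral₀ hg.aemeasurable.ennreal_ofReal 1

theorem stmt_10_general {n : ℕ} (X X₁ : Set (Fin n → ℝ)) (hX : IsCompact X)
    (f : ℝ → (Fin n → ℝ) → (Fin n → ℝ))
    (v₀ : (Fin n → ℝ) → ℝ) (hv₀c : Continuous v₀)
    (v : ℝ × (Fin n → ℝ) → ℝ) (hvc : ContDiff ℝ 1 v)
    (h1 : ∀ x ∈ X, 0 ≤ v₀ x)
    (h2 : ∀ x ∈ X, 1 + v (0, x) ≤ v₀ x)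
    (h3 : ∀ x ∈ X₁, 0 ≤ v (1, x))
    (h4 : ∀ t ∈ Icc (0:ℝ) 1, ∀ x ∈ X, fderiv ℝ v (t, x) (1, f t x) ≤ 0) :
    volume {x₀ | x₀ ∈ X ∧ ∃ x : ℝ → (Fin n → ℝ), x 0 = x₀ ∧
        (∀ t ∈ Icc (0:ℝ) 1, HasDerivAt x (f t (x t)) t) ∧
        (∀ t ∈ Icc (0:ℝ) 1, x t ∈ X) ∧ x 1 ∈ X₁}
      ≤ ENNReal.ofReal (∫ x in X, v₀ x) := by
  have hconsistent : {x₀ | x₀ ∈ X ∧ ∃ x : ℝ → (Fin n → ℝ), x 0 = x₀ ∧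
      (∀ t ∈ Icc (0:ℝ) 1, HasDerivAt x (f t (x t)) t) ∧
      (∀ t ∈ Icc (0:ℝ) 1, x t ∈ X) ∧ x 1 ∈ X₁} ⊆ {y | y ∈ X ∧ 1 ≤ v₀ y} := by
    rintro _ ⟨hx₀X, x, rfl, hx, hxX, hx₁⟩
    exact ⟨hx₀X, one_le_of_trajectory (hvc.differentiable one_ne_zero) h2 h3 h4 hx hxX hx₁⟩
  exact (measure_mono hconsistent).trans <| measure_one_le_le_ofReal_setIntegral
    hX.isClosed.measurableSet (hv₀c.continuousOn.integrableOn_compact hX) h1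

/-- For any dual-feasible pair `(v₀, v)`, the Lebesgue volume of the consistent set `X₀*`
is bounded by `∫_X v₀ dλ`. -/
theorem stmt_10 {n : ℕ} (X X₁ : Set (Fin n → ℝ)) (hX : IsCompact X)
    (hX₁ : IsClosed X₁) (hX₁X : X₁ ⊆ X)
    (f : ℝ → (Fin n → ℝ) → (Fin n → ℝ))
    (hf : Continuous fun p : ℝ × (Fin n → ℝ) => f p.1 p.2)
    (v₀ : (Fin n → ℝ) → ℝ) (hv₀c : Continuous v₀)
    (v : ℝ × (Fin n → ℝ) → ℝ) (hvc : ContDiff ℝ 1 v)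
    (h1 : ∀ x ∈ X, 0 ≤ v₀ x)
    (h2 : ∀ x ∈ X, 1 + v (0, x) ≤ v₀ x)
    (h3 : ∀ x ∈ X₁, 0 ≤ v (1, x))
    (h4 : ∀ t ∈ Icc (0:ℝ) 1, ∀ x ∈ X, fderiv ℝ v (t, x) (1, f t x) ≤ 0) :
    volume {x₀ | x₀ ∈ X ∧ ∃ x : ℝ → (Fin n → ℝ), x 0 = x₀ ∧
        (∀ t ∈ Icc (0:ℝ) 1, HasDerivAt x (f t (x t)) t) ∧
        (∀ t ∈ Icc (0:ℝ) 1, x t ∈ X) ∧ x 1 ∈ X₁}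
      ≤ ENNReal.ofReal (∫ x in X, v₀ x) :=
  stmt_10_general X X₁ hX f v₀ hv₀c v hvc h1 h2 h3 h4
end

section
/- If x₀ ∈ X₀* (the consistent set) then the Dirac measures μ₀ = δ_{x₀}, μ_k = δ_{x(t_k|x₀)}, together with the arc occupation measures μ_{k,k+1} of the trajectory, form a feasible solution of the multi-arc Liouville system: L' μ_{k,k+1} = δ_{t_{k+1}} μ_{k+1} − δ_{t_k} μ_k in weak form, with supp μ_k ⊆ X_k and supp μ_{k,k+1} ⊆ [t_k,t_{k+1}]×X. Consequently, if no such family of measures exists, then X₀* is empty. -/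
open MeasureTheory Set

/-!
Along the trajectory, `s ↦ v (s, x(s|x₀))` has derivative `Dv (s, x(s|x₀)) (1, f s x(s|x₀))`,
so the weak Liouville equation for the arc occupation measure is the fundamental theorem of
calculus after the change of variables `p = (s, x(s|x₀))`. The occupation measure is concentrated
on the compact graph of the trajectory over `[t_k, t_{k+1}]`, which lies in `[t_k, t_{k+1}] × X`.
-/

theorem MeasureTheory.Measure.map_restrict_apply_compl_eq_zero_of_mapsTo
    {α β : Type*} [TopologicalSpace α] [T2Space α] [MeasurableSpace α] [OpensMeasurableSpace α]
    [TopologicalSpace β] [T2Space β] [MeasurableSpace β] [BorelSpace β]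
    {μ : Measure α} {f : α → β} {s : Set α} {t : Set β}
    (hs : IsCompact s) (hf : ContinuousOn f s) (hst : MapsTo f s t) :
    (μ.restrict s).map f tᶜ = 0 := by
  have himage : IsClosed (f '' s) := (hs.image_of_continuousOn hf).isClosed
  refine measure_mono_null (compl_subset_compl.2 hst.image_subset) ?_
  rw [Measure.map_apply_of_aemeasurable (hf.aemeasurable hs.measurableSet)
    himage.measurableSet.compl, Measure.restrict_apply' hs.measurableSet]
  convert measure_empty (μ := μ)
  exact eq_empty_of_forall_notMem fun x ⟨hxK, hx⟩ => hxK (mem_image_of_mem f hx)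

section OccupationMeasure

variable {E : Type*} [NormedAddCommGroup E] [MeasurableSpace E] [BorelSpace E]

noncomputable def occupationMeasure (γ : ℝ → E) (a b : ℝ) : Measure (ℝ × E) :=
  (volume.restrict (Icc a b)).map fun s => (s, γ s)

theorem integral_fderiv_occupationMeasure [NormedSpace ℝ E] {γ : ℝ → E} {g : ℝ × E → E}
    {v : ℝ × E → ℝ} {a b : ℝ} (hab : a ≤ b) (hγ : ∀ s ∈ Icc a b, HasDerivAt γ (g (s, γ s)) s)
    (hg : Continuous g) (hv : ContDiff ℝ 1 v) :
    ∫ p, fderiv ℝ v p (1, g p) ∂occupationMeasure γ a b = v (b, γ b) - v (a, γ a) := by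
  have hgraph : ∀ s ∈ Icc a b, HasDerivAt (fun s => (s, γ s)) ((1 : ℝ), g (s, γ s)) s :=
    fun s hs => (hasDerivAt_id s).prodMk (hγ s hs)
  have hgraph_cont : ContinuousOn (fun s => (s, γ s)) (Icc a b) :=
    fun s hs => (hgraph s hs).continuousAt.continuousWithinAt
  have hintegrand : Continuous fun p => fderiv ℝ v p (1, g p) :=
    (hv.continuous_fderiv one_ne_zero).clm_apply (continuous_const.prodMk hg)
  have hderiv : ∀ s ∈ uIcc a b,
      HasDerivAt (fun s => v (s, γ s)) (fderiv ℝ v (s, γ s) (1, g (s, γ s))) s := by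
    intro s hs
    rw [uIcc_of_le hab] at hs
    exact ((hv.differentiable one_ne_zero) _).hasFDerivAt.comp_hasDerivAt s (hgraph s hs)
  have hint : IntervalIntegrable (fun s => fderiv ℝ v (s, γ s) (1, g (s, γ s))) volume a b :=
    ContinuousOn.intervalIntegrable (by
      rw [uIcc_of_le hab]; exact hintegrand.comp_continuousOn hgraph_cont)
  rw [occupationMeasure, integral_map (hgraph_cont.aemeasurable measurableSet_Icc)
    hintegrand.aestronglyMeasurable, integral_Icc_eq_integral_Ioc,
    ← intervalIntegral.integral_of_le hab]
  exact intervalIntegral.integral_eq_sub_of_hasDerivAt hderiv hint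

theorem occupationMeasure_compl_prod_eq_zero {γ : ℝ → E} {a b : ℝ} {X : Set E}
    (hγ : ContinuousOn γ (Icc a b)) (hX : MapsTo γ (Icc a b) X) :
    occupationMeasure γ a b (Icc a b ×ˢ X)ᶜ = 0 :=
  Measure.map_restrict_apply_compl_eq_zero_of_mapsTo isCompact_Icc
    (continuousOn_id.prodMk hγ) fun _ hs => ⟨hs, hX hs⟩

end OccupationMeasure

theorem stmt_15_general {n m : ℕ}
    (X : Set (Fin n → ℝ))
    (Xk : ℕ → Set (Fin n → ℝ))
    (t : ℕ → ℝ)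
    (hmono : ∀ k < m - 1, t k ≤ t (k + 1)) (htmem : ∀ k ≤ m - 1, t k ∈ Icc (0:ℝ) 1)
    (f : ℝ → (Fin n → ℝ) → (Fin n → ℝ))
    (hf : Continuous fun p : ℝ × (Fin n → ℝ) => f p.1 p.2)
    (flow : ℝ → (Fin n → ℝ) → (Fin n → ℝ))
    (x₀ : Fin n → ℝ)
    (hode : ∀ s ∈ Icc (0:ℝ) 1, HasDerivAt (fun r => flow r x₀) (f s (flow s x₀)) s)
    (hstay : ∀ s ∈ Icc (0:ℝ) 1, flow s x₀ ∈ X)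
    (hcons : ∀ k ≤ m - 1, flow (t k) x₀ ∈ Xk k) :
    (∀ k ≤ m - 1, Measure.dirac (flow (t k) x₀) (Xk k)ᶜ = 0) ∧
    (∀ k < m - 1,
      (∀ v : ℝ × (Fin n → ℝ) → ℝ, ContDiff ℝ 1 v →
        ∫ p, fderiv ℝ v p (1, f p.1 p.2)
            ∂(Measure.map (fun s : ℝ => (s, flow s x₀))
                (volume.restrict (Icc (t k) (t (k + 1)))))
          = v (t (k + 1), flow (t (k + 1)) x₀) - v (t k, flow (t k) x₀)) ∧
      (Measure.map (fun s : ℝ => (s, flow s x₀))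
          (volume.restrict (Icc (t k) (t (k + 1)))))
        (Icc (t k) (t (k + 1)) ×ˢ X)ᶜ = 0) := by
  refine ⟨fun k hk => by simp [hcons k hk], fun k hk => ?_⟩
  have harc : Icc (t k) (t (k + 1)) ⊆ Icc 0 1 :=
    Icc_subset_Icc (htmem k hk.le).1 (htmem (k + 1) hk).2
  have hderiv : ∀ s ∈ Icc (t k) (t (k + 1)),
      HasDerivAt (fun r => flow r x₀) (f s (flow s x₀)) s :=
    fun s hs => hode s (harc hs)
  exact ⟨fun v hv => integral_fderiv_occupationMeasure (hmono k hk) hderiv hf hv,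
    occupationMeasure_compl_prod_eq_zero
      (fun s hs => (hderiv s hs).continuousAt.continuousWithinAt) fun s hs => hstay s (harc hs)⟩

/-- If `x₀` belongs to the consistent set `X₀*`, then the Dirac measures
`μ_k = δ_{x(t_k|x₀)}` together with the arc occupation measures `μ_{k,k+1}` of the
trajectory form a feasible solution of the multi-arc Liouville system:
each `μ_{k,k+1}` satisfies the arc Liouville equation in weak form, is supported on
`[t_k,t_{k+1}] × X`, and each `μ_k` is supported on `X_k`. (Consequently, if no such
family of measures exists, `X₀*` is empty.) -/
theorem stmt_15 {n m : ℕ} (hm : 2 ≤ m)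
    (X : Set (Fin n → ℝ)) (hX : IsCompact X)
    (Xk : ℕ → Set (Fin n → ℝ)) (hXk : ∀ k ≤ m - 1, IsClosed (Xk k) ∧ Xk k ⊆ X)
    (t : ℕ → ℝ) (ht0 : t 0 = 0) (ht1 : t (m - 1) = 1)
    (hmono : ∀ k < m - 1, t k ≤ t (k + 1)) (htmem : ∀ k ≤ m - 1, t k ∈ Icc (0:ℝ) 1)
    (f : ℝ → (Fin n → ℝ) → (Fin n → ℝ))
    (hf : Continuous fun p : ℝ × (Fin n → ℝ) => f p.1 p.2)
    (flow : ℝ → (Fin n → ℝ) → (Fin n → ℝ))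
    (x₀ : Fin n → ℝ) (hx₀X : x₀ ∈ X)
    (hflow0 : flow 0 x₀ = x₀)
    (hode : ∀ s ∈ Icc (0:ℝ) 1, HasDerivAt (fun r => flow r x₀) (f s (flow s x₀)) s)
    (hstay : ∀ s ∈ Icc (0:ℝ) 1, flow s x₀ ∈ X)
    (hcons : ∀ k ≤ m - 1, flow (t k) x₀ ∈ Xk k) :
    (∀ k ≤ m - 1, Measure.dirac (flow (t k) x₀) (Xk k)ᶜ = 0) ∧
    (∀ k < m - 1,
      (∀ v : ℝ × (Fin n → ℝ) → ℝ, ContDiff ℝ 1 v →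
        ∫ p, fderiv ℝ v p (1, f p.1 p.2)
            ∂(Measure.map (fun s : ℝ => (s, flow s x₀))
                (volume.restrict (Icc (t k) (t (k + 1)))))
          = v (t (k + 1), flow (t (k + 1)) x₀) - v (t k, flow (t k) x₀)) ∧
      (Measure.map (fun s : ℝ => (s, flow s x₀))
          (volume.restrict (Icc (t k) (t (k + 1)))))
        (Icc (t k) (t (k + 1)) ×ˢ X)ᶜ = 0) :=
  stmt_15_general X Xk t hmono htmem f hf flow x₀ hode hstay hcons
end
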